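/- If X is a simplicial complex with both the sphere and disc local injectivity properties up to dimension d, then X is d-connected. -/

import Mathlib

/-!
By the sphere property, a map `f : S^m → |X|` is homotopic to the realization of a locally
injective simplicial map `g` from a combinatorial `m`-sphere. By the disc property `g` extends
to a simplicial map on a combinatorial `(m+1)`-disc `L`, so the realization of `g` factors
through the contractible space `|L|`. Hence `f` is nullhomotopic, and a nullhomotopy of `f`,
read as a map on the cone over `S^m`, extends `f` over the disc.
-/

/-! Shared simplicial-complex framework. -/

/-- The model `m`-sphere, for an integer `m`; it is empty when `m < 0`,
and is the unit sphere in `ℝ^{m+1}` when `m ≥ 0`. -/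
def sphereSpace (m : ℤ) : Type :=
  {x : EuclideanSpace ℝ (Fin (m + 1).toNat) // ‖x‖ = 1 ∧ 0 ≤ m}

noncomputable instance (m : ℤ) : TopologicalSpace (sphereSpace m) := by
  unfold sphereSpace; infer_instance

/-- The model `m`-disc: empty for `m < 0`, a point for `m = 0`,
the closed unit ball in `ℝ^m` for `m ≥ 0`. -/
def discSpace (m : ℤ) : Type :=
  {x : EuclideanSpace ℝ (Fin m.toNat) // ‖x‖ ≤ 1 ∧ 0 ≤ m}

noncomputable instance (m : ℤ) : TopologicalSpace (discSpace m) := by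
  unfold discSpace; infer_instance

/-- The inclusion of the model `m`-sphere as the boundary of the model `(m+1)`-disc. -/
noncomputable local instance (priority := low) (α : Type*) : DecidableEq α :=
  fun _ _ => Classical.propDecidable _

def sphereToDisc (m : ℤ) (x : sphereSpace m) : discSpace (m + 1) :=
  ⟨x.1, le_of_eq x.2.1, by have := x.2.2; omega⟩

/-- An abstract simplicial complex on a vertex set `V`: a collection of nonempty
finite subsets of `V` closed under passing to nonempty subsets. -/
def IsComplex {V : Type*} (K : Set (Finset V)) : Prop :=
  ∀ σ ∈ K, σ ≠ ∅ ∧ ∀ τ ⊆ σ, τ ≠ ∅ → τ ∈ K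

/-- The link of a simplex `σ` in `K`. -/
def link {V : Type*} (K : Set (Finset V)) (σ : Finset V) : Set (Finset V) :=
  {τ | τ ∈ K ∧ Disjoint σ τ ∧ σ ∪ τ ∈ K}

/-- The geometric realization of `K`: formal convex combinations of vertices
supported on a simplex of `K`. -/
def spc {V : Type*} (K : Set (Finset V)) : Type _ :=
  {w : V →₀ ℝ // w.support ∈ K ∧ (∀ v, 0 ≤ w v) ∧ (w.sum fun _ c => c) = 1}

instance {V : Type*} (K : Set (Finset V)) : TopologicalSpace (spc K) :=
  TopologicalSpace.induced (fun w => ((w.1 : V →₀ ℝ) : V → ℝ)) inferInstance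

/-- A simplicial map from `K` to `X`, given on vertices by `f`. -/
def IsSimplicial {V U : Type*} (K : Set (Finset V)) (X : Set (Finset U)) (f : V → U) : Prop :=
  ∀ σ ∈ K, σ.image f ∈ X

/-- `f` is locally injective on `K`: it preserves dimensions of simplices. -/
def LocInj {V U : Type*} (K : Set (Finset V)) (f : V → U) : Prop :=
  ∀ σ ∈ K, (σ.image f).card = σ.card

/-- `K` is a combinatorial triangulation of the `m`-sphere. -/
def IsCombTriSphere {V : Type*} (m : ℤ) (K : Set (Finset V)) : Prop :=
  IsComplex K ∧ Nonempty (spc K ≃ₜ sphereSpace m) ∧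
    ∀ σ ∈ K, Nonempty (spc (link K σ) ≃ₜ sphereSpace (m - σ.card))

/-- `K` is a combinatorial triangulation of the `m`-disc. -/
def IsCombTriDisc {V : Type*} (m : ℤ) (K : Set (Finset V)) : Prop :=
  IsComplex K ∧ Nonempty (spc K ≃ₜ discSpace m) ∧
    ∀ σ ∈ K, Nonempty (spc (link K σ) ≃ₜ sphereSpace (m - σ.card)) ∨
      Nonempty (spc (link K σ) ≃ₜ discSpace (m - σ.card))

/-- The boundary of a combinatorial triangulation of the `m`-disc:
the simplices whose link is not a sphere of the complementary dimension. -/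
def discBoundary {V : Type*} (m : ℤ) (K : Set (Finset V)) : Set (Finset V) :=
  {σ ∈ K | ¬ Nonempty (spc (link K σ) ≃ₜ sphereSpace (m - σ.card))}

/-- The locally injective simplicial map `f` from a triangulated `m`-sphere `K` to `X`
extends to a locally injective simplicial map on a combinatorial triangulation of the
`(m+1)`-disc whose boundary is `K`. -/
def ExtendsToDisc {U V : Type} (X : Set (Finset U)) (m : ℤ) (K : Set (Finset V))
    (f : V → U) : Prop :=
  ∃ (W : Type) (L : Set (Finset W)) (j : V → W) (F : W → U),
    IsCombTriDisc (m + 1) L ∧ Function.Injective j ∧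
    (∀ σ ∈ K, σ.image j ∈ L) ∧
    ((fun σ : Finset V => σ.image j) '' K = discBoundary (m + 1) L) ∧
    (∀ v, F (j v) = f v) ∧ IsSimplicial L X F ∧ LocInj L F

/-- `X` has the disc local injectivity property up to dimension `d`. -/
def HasDiscLII {U : Type} (X : Set (Finset U)) (d : ℤ) : Prop :=
  ∀ m : ℤ, m ≤ d → ∀ (V : Type) (K : Set (Finset V)) (f : V → U),
    IsCombTriSphere m K → IsSimplicial K X f → LocInj K f → ExtendsToDisc X m K f

/-- The continuous map `G` realizes the simplicial map `g`. -/
def Realizes {V U : Type} (K : Set (Finset V)) (X : Set (Finset U)) (g : V → U)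
    (G : C(spc K, spc X)) : Prop :=
  ∀ w : spc K, ((G w).1 : U →₀ ℝ) = Finsupp.mapDomain g w.1

/-- `X` has the sphere local injectivity property up to dimension `d`. -/
def HasSphereLII {U : Type} (X : Set (Finset U)) (d : ℤ) : Prop :=
  ∀ m : ℤ, m ≤ d → ∀ f : C(sphereSpace m, spc X),
    ∃ (V : Type) (K : Set (Finset V)) (g : V → U) (e : spc K ≃ₜ sphereSpace m)
      (G : C(spc K, spc X)),
      IsCombTriSphere m K ∧ IsSimplicial K X g ∧ LocInj K g ∧ Realizes K X g G ∧
      (f.comp (e : C(spc K, sphereSpace m))).Homotopic G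

/-- A space is `d`-connected (`d ∈ ℤ`): every map from a sphere of dimension `≤ d`
extends over the disc. -/
def DConnected (X : Type*) [TopologicalSpace X] (d : ℤ) : Prop :=
  ∀ m : ℤ, m ≤ d → ∀ f : C(sphereSpace m, X),
    ∃ F : C(discSpace (m + 1), X), ∀ x, F (sphereToDisc m x) = f x

/-- `K` is weakly Cohen–Macaulay of dimension `d`. -/
def WCM {V : Type*} (K : Set (Finset V)) (d : ℤ) : Prop :=
  DConnected (spc K) (d - 1) ∧ ∀ σ ∈ K, DConnected (spc (link K σ)) (d - σ.card - 1)

open Topology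

namespace spc

variable {V : Type*} {K : Set (Finset V)}

lemma continuous_apply (v : V) : Continuous fun w : spc K => w.1 v :=
  (_root_.continuous_apply v).comp continuous_induced_dom

noncomputable def mass (s : Set V) (w : spc K) : ℝ :=
  ∑ v ∈ w.1.support, s.indicator w.1 v

lemma mass_nonneg (s : Set V) (w : spc K) : 0 ≤ mass s w :=
  Finset.sum_nonneg fun v _ => Set.indicator_nonneg (fun v _ => w.2.2.1 v) v

lemma sum_indicator_le_mass (s : Set V) (w : spc K) (T : Finset V) :
    ∑ v ∈ T, s.indicator w.1 v ≤ mass s w := by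
  have hnonneg : ∀ v, 0 ≤ s.indicator w.1 v := Set.indicator_nonneg fun v _ => w.2.2.1 v
  calc ∑ v ∈ T, s.indicator w.1 v
      ≤ ∑ v ∈ T ∪ w.1.support, s.indicator w.1 v :=
        Finset.sum_le_sum_of_subset_of_nonneg Finset.subset_union_left fun v _ _ => hnonneg v
    _ = mass s w := by
        refine (Finset.sum_subset Finset.subset_union_right fun v _ hv => ?_).symm
        simp [Finsupp.notMem_support_iff.mp hv]

lemma mass_add_mass_compl (s : Set V) (w : spc K) : mass s w + mass sᶜ w = 1 := by
  rw [mass, mass, ← Finset.sum_add_distrib]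
  simp only [Set.indicator_self_add_compl_apply]
  exact w.2.2.2

/-- Supports vary from point to point, so `mass s` is not locally a finite sum of coordinates;
instead, near `w₀` it is squeezed between the continuous functions
`∑ v ∈ supp w₀, s.indicator w v` and `1 - ∑ v ∈ supp w₀, sᶜ.indicator w v`,
which both agree with it at `w₀`. -/
lemma continuous_mass (s : Set V) : Continuous (mass (K := K) s) := by
  refine continuous_iff_continuousAt.2 fun w₀ => ?_
  have continuous_sum (t : Set V) :
      Continuous fun w : spc K => ∑ v ∈ w₀.1.support, t.indicator w.1 v := by
    refine continuous_finsetSum _ fun v _ => ?_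
    by_cases hv : v ∈ t
    · simpa [hv] using continuous_apply v
    · simpa [hv] using continuous_const
  have hlower := (continuous_sum s).tendsto w₀
  have hupper : Filter.Tendsto (fun w : spc K => 1 - ∑ v ∈ w₀.1.support, sᶜ.indicator w.1 v)
      (𝓝 w₀) (𝓝 (mass s w₀)) := by
    rw [eq_sub_of_add_eq (mass_add_mass_compl s w₀)]
    exact (continuous_const.sub (continuous_sum sᶜ)).tendsto w₀
  exact tendsto_of_tendsto_of_tendsto_of_le_of_le hlower hupper
    (sum_indicator_le_mass s · _)
    fun w => by linarith [sum_indicator_le_mass sᶜ w w₀.1.support, mass_add_mass_compl s w]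

lemma mapDomain_apply_eq_mass {U : Type*} (f : V → U) (w : spc K) (u : U) :
    Finsupp.mapDomain f w.1 u = mass (f ⁻¹' {u}) w := by
  rw [Finsupp.mapDomain, Finsupp.sum_apply, Finsupp.sum, mass]
  refine Finset.sum_congr rfl fun v _ => ?_
  by_cases h : f v = u <;> simp [h]

lemma support_mapDomain {U : Type*} (f : V → U) (w : spc K) :
    (Finsupp.mapDomain f w.1).support = w.1.support.image f := by
  refine Finsupp.mapDomain_support.antisymm fun u hu => ?_
  obtain ⟨v, hv, rfl⟩ := Finset.mem_image.mp hu
  have hpos : 0 < w.1 v := (w.2.2.1 v).lt_of_ne (Finsupp.mem_support_iff.mp hv).symm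
  have hle : w.1 v ≤ mass (f ⁻¹' {f v}) w := by
    simpa using sum_indicator_le_mass (f ⁻¹' {f v}) w {v}
  rw [Finsupp.mem_support_iff, mapDomain_apply_eq_mass]
  exact (hpos.trans_le hle).ne'

noncomputable def map {U : Type*} {X : Set (Finset U)} {f : V → U}
    (hs : IsSimplicial K X f) : C(spc K, spc X) where
  toFun w := ⟨Finsupp.mapDomain f w.1, support_mapDomain f w ▸ hs _ w.2.1,
    fun u => (mapDomain_apply_eq_mass f w u).symm ▸ mass_nonneg _ w,
    by rw [Finsupp.sum_mapDomain_index (fun _ => rfl) (fun _ _ _ => rfl)]; exact w.2.2.2⟩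
  continuous_toFun := continuous_induced_rng.2 <| continuous_pi fun u =>
    (continuous_mass (f ⁻¹' {u})).congr fun w => (mapDomain_apply_eq_mass f w u).symm

end spc

lemma Realizes.eq_map_comp_map {V W U : Type} {K : Set (Finset V)} {L : Set (Finset W)}
    {X : Set (Finset U)} {g : V → U} {G : C(spc K, spc X)} (hG : Realizes K X g G)
    {j : V → W} {F : W → U} (hj : IsSimplicial K L j) (hF : IsSimplicial L X F)
    (hFj : ∀ v, F (j v) = g v) : G = (spc.map hF).comp (spc.map hj) := by
  ext1 w
  refine Subtype.ext ?_
  change _ = Finsupp.mapDomain F (Finsupp.mapDomain j w.1)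
  rw [hG w, ← Finsupp.mapDomain_comp]
  exact congrArg (Finsupp.mapDomain · w.1) (funext hFj).symm


lemma sphereSpace.isEmpty {m : ℤ} (hm : m < 0) : IsEmpty (sphereSpace m) :=
  ⟨fun x => by have := x.2.2; omega⟩

lemma discSpace.isEmpty {n : ℤ} (hn : n < 0) : IsEmpty (discSpace n) :=
  ⟨fun x => by have := x.2.2; omega⟩

instance sphereSpace.compactSpace (m : ℤ) : CompactSpace (sphereSpace m) :=
  isCompact_iff_compactSpace.mp <|
    (isCompact_sphere (0 : EuclideanSpace ℝ (Fin (m + 1).toNat)) 1).of_isClosed_subset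
      ((isClosed_eq continuous_norm continuous_const).inter isClosed_const)
      fun _ hx => by simpa using hx.1

instance discSpace.t2Space (n : ℤ) : T2Space (discSpace n) := by
  unfold discSpace; infer_instance

lemma discSpace.contractibleSpace {n : ℤ} (hn : 0 ≤ n) : ContractibleSpace (discSpace n) :=
  Convex.contractibleSpace (s := {x : EuclideanSpace ℝ (Fin n.toNat) | ‖x‖ ≤ 1 ∧ 0 ≤ n})
    (by simpa [hn, Metric.closedBall] using
      convex_closedBall (0 : EuclideanSpace ℝ (Fin n.toNat)) 1)
    ⟨0, by simp, hn⟩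

lemma IsCombTriDisc.contractibleSpace {V : Type*} {n : ℤ} {L : Set (Finset V)}
    (hL : IsCombTriDisc n L) (hn : 0 ≤ n) : ContractibleSpace (spc L) :=
  have := discSpace.contractibleSpace hn
  hL.2.1.some.contractibleSpace

noncomputable def coneMap (m : ℤ) : C(unitInterval × sphereSpace m, discSpace (m + 1)) where
  toFun p := ⟨(1 - (p.1 : ℝ)) • p.2.1, by
    rw [norm_smul, p.2.2.1, mul_one, Real.norm_of_nonneg (unitInterval.one_minus_nonneg p.1)]
    exact ⟨unitInterval.one_minus_le_one p.1, by have := p.2.2.2; omega⟩⟩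
  continuous_toFun := by
    refine Continuous.subtype_mk ?_ _
    exact (continuous_const.sub (continuous_subtype_val.comp continuous_fst)).smul
      (continuous_subtype_val.comp continuous_snd)

lemma norm_coneMap {m : ℤ} (p : unitInterval × sphereSpace m) :
    ‖(coneMap m p).1‖ = 1 - p.1 := by
  change ‖(1 - (p.1 : ℝ)) • p.2.1‖ = _
  rw [norm_smul, p.2.2.1, mul_one, Real.norm_of_nonneg (unitInterval.one_minus_nonneg p.1)]

lemma coneMap_zero {m : ℤ} (x : sphereSpace m) : coneMap m (0, x) = sphereToDisc m x :=
  Subtype.ext <| by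
    change (1 - ((0 : unitInterval) : ℝ)) • x.1 = x.1
    simp

lemma coneMap_surjective {m : ℤ} (hm : 0 ≤ m) : Function.Surjective (coneMap m) := by
  intro x
  have hx1 : ‖x.1‖ ≤ 1 := x.2.1
  by_cases hx : x.1 = 0
  · let e : sphereSpace m :=
      ⟨EuclideanSpace.single ⟨0, by omega⟩ 1, by simp, hm⟩
    refine ⟨(1, e), Subtype.ext ?_⟩
    change (1 - ((1 : unitInterval) : ℝ)) • e.1 = x.1
    simp [hx]
  · refine ⟨(⟨1 - ‖x.1‖, by simpa using hx1, by simp⟩,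
      ⟨‖x.1‖⁻¹ • x.1, norm_smul_inv_norm hx, hm⟩), Subtype.ext ?_⟩
    change (1 - (1 - ‖x.1‖)) • ‖x.1‖⁻¹ • x.1 = x.1
    rw [sub_sub_cancel, smul_inv_smul₀ (norm_ne_zero_iff.mpr hx)]

lemma fst_eq_of_coneMap_eq {m : ℤ} {p q : unitInterval × sphereSpace m}
    (h : coneMap m p = coneMap m q) : p.1 = q.1 := by
  have := norm_coneMap p
  rw [h, norm_coneMap] at this
  exact Subtype.ext (by linarith)

lemma eq_of_coneMap_eq {m : ℤ} {t : unitInterval} {x x' : sphereSpace m}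
    (h : coneMap m (t, x) = coneMap m (t, x')) (ht : t ≠ 1) : x = x' :=
  Subtype.ext <| smul_right_injective _ (sub_ne_zero.mpr (Subtype.coe_ne_coe.mpr ht).symm)
    (congrArg Subtype.val h)

lemma exists_extension_of_nullhomotopic {Y : Type*} [TopologicalSpace Y] {m : ℤ}
    {f : C(sphereSpace m, Y)} (hf : f.Nullhomotopic) :
    ∃ F : C(discSpace (m + 1), Y), ∀ x, F (sphereToDisc m x) = f x := by
  obtain ⟨y, ⟨H⟩⟩ := hf
  obtain hm | hm := lt_or_ge m 0
  · have := sphereSpace.isEmpty hm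
    exact ⟨.const _ y, isEmptyElim⟩
  have hcone : IsQuotientMap (coneMap m) :=
    (coneMap m).continuous.isClosedMap.isQuotientMap (coneMap m).continuous
      (coneMap_surjective hm)
  have hH : Function.FactorsThrough H (coneMap m) := by
    rintro ⟨t, x⟩ ⟨t', x'⟩ h
    obtain rfl := fst_eq_of_coneMap_eq h
    by_cases ht : t = 1
    · subst ht
      rw [H.apply_one, H.apply_one, ContinuousMap.const_apply, ContinuousMap.const_apply]
    · rw [eq_of_coneMap_eq h ht]
  refine ⟨hcone.lift H.toContinuousMap hH, fun x => ?_⟩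
  rw [← coneMap_zero, ← ContinuousMap.comp_apply, hcone.lift_comp]
  exact H.apply_zero x

lemma ContinuousMap.nullhomotopic_comp_of_contractibleSpace {X Y Z : Type*} [TopologicalSpace X]
    [TopologicalSpace Y] [TopologicalSpace Z] [ContractibleSpace Y] (g : C(Y, Z)) (f : C(X, Y)) :
    (g.comp f).Nullhomotopic := by
  simpa using ((id_nullhomotopic Y).comp_right g).comp_left f

theorem stmt3_general {U : Type} (X : Set (Finset U)) (d : ℤ)
    (hsphere : HasSphereLII X d) (hdisc : HasDiscLII X d) :
    DConnected (spc X) d := by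
  intro m hm f
  obtain hdim | hdim := lt_or_ge (m + 1) 0
  · have := discSpace.isEmpty hdim
    exact ⟨⟨isEmptyElim, by fun_prop⟩, fun x => isEmptyElim (sphereToDisc m x)⟩
  obtain ⟨V, K, g, e, G, hK, hg, hgl, hG, hfG⟩ := hsphere m hm f
  obtain ⟨W, L, j, F, hL, -, hj, -, hFj, hF, -⟩ := hdisc m hm V K g hK hg hgl
  have := hL.contractibleSpace hdim
  obtain ⟨y, hGy⟩ : G.Nullhomotopic := by
    rw [hG.eq_map_comp_map hj hF hFj]
    exact ContinuousMap.nullhomotopic_comp_of_contractibleSpace _ _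
  have hfe : (f.comp (e : C(spc K, sphereSpace m))).Nullhomotopic := ⟨y, hfG.trans hGy⟩
  refine exists_extension_of_nullhomotopic ?_
  simpa [ContinuousMap.comp_assoc] using hfe.comp_left (e.symm : C(sphereSpace m, spc K))

/-- If a simplicial complex `X` has both the sphere and the disc local
injectivity properties up to dimension `d`, then (the geometric realization of) `X` is
`d`-connected. -/
theorem stmt3 {U : Type} (X : Set (Finset U)) (d : ℤ) (hX : IsComplex X)
    (hsphere : HasSphereLII X d) (hdisc : HasDiscLII X d) :
    DConnected (spc X) d :=
  stmt3_general X d hsphere hdisc
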